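/- For every PP-pattern (α,r,β) with α,β ∈ U∪Lit∪Var, there exists an LDQL query q such that ⟦(α,r,β)⟧_ctxt^W = ⟦q⟧_W^∅ for every Web of Linked Data W, where ∅ is the empty seed set of URIs. -/

import Mathlib

namespace LDQLFormal

noncomputable section
open Classical

/-! ### Basic RDF model -/

abbrev URI := ℕ
abbrev BNodeId := ℕ
abbrev LitId := ℕ
abbrev Var := ℕ
abbrev Doc := ℕ

/-- Subject terms: URIs or blank nodes. -/
inductive Subj where
  | uri (u : URI)
  | bnode (b : BNodeId)
deriving DecidableEq

/-- RDF terms (objects): URIs, blank nodes, or literals. -/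
inductive Obj where
  | uri (u : URI)
  | bnode (b : BNodeId)
  | lit (l : LitId)
deriving DecidableEq

structure RDFTriple where
  s : Subj
  p : URI
  o : Obj
deriving DecidableEq

def Subj.toObj : Subj → Obj
  | .uri u => .uri u
  | .bnode b => .bnode b

/-- The set of URIs occurring in an RDF triple. -/
def urisOf (t : RDFTriple) : Set URI :=
  {u | t.s = .uri u ∨ t.p = u ∨ t.o = .uri u}

/-- A Web of Linked Data: a finite set of documents, the data in each
document (a finite set of RDF triples), and a surjective partial function
`adoc` from URIs to documents. -/
structure Web where
  docs : Set Doc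
  finite_docs : docs.Finite
  data : Doc → Finset RDFTriple
  adoc : URI → Option Doc
  adoc_mem : ∀ u d, adoc u = some d → d ∈ docs
  adoc_surj : ∀ d ∈ docs, ∃ u, adoc u = some d

/-- Link graph edge `(d, (t,u), d')`. -/
def Web.edge (W : Web) (d : Doc) (t : RDFTriple) (u : URI) (d' : Doc) : Prop :=
  d ∈ W.docs ∧ t ∈ W.data d ∧ u ∈ urisOf t ∧ W.adoc u = some d'

/-! ### Link patterns -/

/-- Components of a link pattern drawn from `U ∪ {*, +}`. -/
inductive LPUP where
  | uri (u : URI)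
  | star
  | plus
deriving DecidableEq

/-- Components of a link pattern drawn from `U ∪ Lit ∪ {*, +}`. -/
inductive LPULP where
  | uri (u : URI)
  | lit (l : LitId)
  | star
  | plus
deriving DecidableEq

structure LinkPattern where
  c1 : LPUP
  c2 : LPUP
  c3 : LPULP

def matchSubj (y : LPUP) (uctx : URI) (x : Subj) : Prop :=
  match y with
  | .uri w => x = .uri w
  | .star => True
  | .plus => x = .uri uctx

def matchPred (y : LPUP) (uctx : URI) (x : URI) : Prop :=
  match y with
  | .uri w => x = w
  | .star => True
  | .plus => x = uctx

def matchObj (y : LPULP) (uctx : URI) (x : Obj) : Prop :=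
  match y with
  | .uri w => x = .uri w
  | .lit l => x = .lit l
  | .star => True
  | .plus => x = .uri uctx

/-- An edge with label `(t,u)` matches a link pattern in the context of `uctx`. -/
def lpMatch (lp : LinkPattern) (uctx : URI) (t : RDFTriple) (u : URI) : Prop :=
  ((lp.c1 = .star ∧ t.s = .uri u) ∨ (lp.c2 = .star ∧ t.p = u) ∨ (lp.c3 = .star ∧ t.o = .uri u))
  ∧ matchSubj lp.c1 uctx t.s ∧ matchPred lp.c2 uctx t.p ∧ matchObj lp.c3 uctx t.o

/-! ### Solution mappings -/

abbrev Mapping := Var → Option Obj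

def mdom (μ : Mapping) : Set Var := {v | μ v ≠ none}

def emptyMap : Mapping := fun _ => none

def single (v : Var) (o : Obj) : Mapping := fun w => if w = v then some o else none

def compatible (μ1 μ2 : Mapping) : Prop :=
  ∀ v a b, μ1 v = some a → μ2 v = some b → a = b

def munion (μ1 μ2 : Mapping) : Mapping := fun v =>
  match μ1 v with
  | some a => some a
  | none => μ2 v

/-- Join of two sets of solution mappings. -/
def mjoin (Ω1 Ω2 : Set Mapping) : Set Mapping :=
  {μ | ∃ μ1 ∈ Ω1, ∃ μ2 ∈ Ω2, compatible μ1 μ2 ∧ μ = munion μ1 μ2}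

/-- Restriction of a mapping to a finite set of variables. -/
def restrictV (V : Finset Var) (μ : Mapping) : Mapping := fun v =>
  if v ∈ V then μ v else none

/-! ### SPARQL graph patterns -/

inductive PTerm where
  | var (v : Var)
  | term (o : Obj)
deriving DecidableEq

structure TriplePattern where
  sj : PTerm
  pr : PTerm
  ob : PTerm
deriving DecidableEq

def PTerm.varsOf : PTerm → Set Var
  | .var v => {v}
  | .term _ => ∅

def TriplePattern.varsOf (t : TriplePattern) : Set Var :=
  t.sj.varsOf ∪ t.pr.varsOf ∪ t.ob.varsOf

def pval (μ : Mapping) : PTerm → Option Obj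
  | .var v => μ v
  | .term o => some o

def objToSubj : Obj → Option Subj
  | .uri u => some (.uri u)
  | .bnode b => some (.bnode b)
  | .lit _ => none

def objToURI : Obj → Option URI
  | .uri u => some u
  | _ => none

/-- `tpInst μ tp = some t` iff `μ[tp] = t` (all variables of `tp` bound by `μ`
and the instantiation is a well-formed RDF triple). -/
def tpInst (μ : Mapping) (t : TriplePattern) : Option RDFTriple := do
  let s ← pval μ t.sj
  let s' ← objToSubj s
  let p ← pval μ t.pr
  let p' ← objToURI p
  let o ← pval μ t.ob
  return ⟨s', p', o⟩

/-- Filter conditions. -/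
inductive Cond where
  | eq (a b : PTerm)
  | neq (a b : PTerm)
  | and (c1 c2 : Cond)
  | or (c1 c2 : Cond)
  | not (c : Cond)

def condHolds (μ : Mapping) : Cond → Prop
  | .eq a b => ∃ x, pval μ a = some x ∧ pval μ b = some x
  | .neq a b => ∃ x y, pval μ a = some x ∧ pval μ b = some y ∧ x ≠ y
  | .and c1 c2 => condHolds μ c1 ∧ condHolds μ c2
  | .or c1 c2 => condHolds μ c1 ∨ condHolds μ c2
  | .not c => ¬ condHolds μ c

/-- SPARQL graph patterns, built from triple patterns with
AND, UNION, OPT, FILTER, GRAPH and BIND. -/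
inductive GP where
  | empty
  | tp (t : TriplePattern)
  | and (g1 g2 : GP)
  | union (g1 g2 : GP)
  | opt (g1 g2 : GP)
  | filter (g : GP) (c : Cond)
  | graphU (u : URI) (g : GP)
  | graphV (v : Var) (g : GP)
  | bind (g : GP) (o : Obj) (v : Var)

/-- An RDF dataset: a default graph together with named graphs. -/
structure RDFDataset where
  dflt : Set RDFTriple
  named : URI → Option (Set RDFTriple)

/-- Standard set-based SPARQL evaluation of a graph pattern over an RDF
dataset `D` with active graph `G`. -/
def evalGP (D : RDFDataset) : GP → Set RDFTriple → Set Mapping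
  | .empty, _ => {emptyMap}
  | .tp t, G => {μ | mdom μ = t.varsOf ∧ ∃ tr ∈ G, tpInst μ t = some tr}
  | .and g1 g2, G => mjoin (evalGP D g1 G) (evalGP D g2 G)
  | .union g1 g2, G => evalGP D g1 G ∪ evalGP D g2 G
  | .opt g1 g2, G =>
      mjoin (evalGP D g1 G) (evalGP D g2 G) ∪
        {μ | μ ∈ evalGP D g1 G ∧ ∀ μ2 ∈ evalGP D g2 G, ¬ compatible μ μ2}
  | .filter g c, G => {μ | μ ∈ evalGP D g G ∧ condHolds μ c}
  | .graphU u g, _ => {μ | ∃ G', D.named u = some G' ∧ μ ∈ evalGP D g G'}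
  | .graphV v g, _ =>
      {μ | ∃ u G', D.named u = some G' ∧ ∃ μ' ∈ evalGP D g G',
            compatible μ' (single v (.uri u)) ∧ μ = munion μ' (single v (.uri u))}
  | .bind g o v, G => {μ' | ∃ μ ∈ evalGP D g G, μ v = none ∧ μ' = munion μ (single v o)}

/-! ### LDQL syntax -/

mutual
/-- LDQL queries. -/
inductive LDQL where
  | base (l : LPE) (P : GP)
  | seedU (U0 : Finset URI) (q : LDQL)
  | seedV (v : Var) (q : LDQL)
  | qand (q1 q2 : LDQL)
  | qunion (q1 q2 : LDQL)
  | proj (V0 : Finset Var) (q : LDQL)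

/-- Link path expressions. -/
inductive LPE where
  | eps
  | pat (lp : LinkPattern)
  | seq (l1 l2 : LPE)
  | alt (l1 l2 : LPE)
  | star (l : LPE)
  | test (l : LPE)
  | sub (v : Var) (q : LDQL)
end

/-- `dataset_W(U0)`. -/
def datasetW (W : Web) (U0 : Set URI) : RDFDataset where
  dflt := {t | ∃ u ∈ U0, ∃ d, W.adoc u = some d ∧ t ∈ W.data d}
  named := fun u =>
    if u ∈ U0 then (W.adoc u).map (fun d => ((W.data d : Finset RDFTriple) : Set RDFTriple))
    else none

/-! ### LDQL semantics -/

mutual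
/-- The S-based evaluation `⟦q⟧_W^S` of an LDQL query. -/
def evalQ (W : Web) : LDQL → Set URI → Set Mapping
  | .base l P, S =>
      evalGP (datasetW W {u' | ∃ u ∈ S, u' ∈ evalL W l u}) P
        (datasetW W {u' | ∃ u ∈ S, u' ∈ evalL W l u}).dflt
  | .seedU U0 q, _ => evalQ W q ↑U0
  | .seedV v q, _ => ⋃ u : URI, mjoin (evalQ W q {u}) {single v (.uri u)}
  | .qand q1 q2, S => mjoin (evalQ W q1 S) (evalQ W q2 S)
  | .qunion q1 q2, S => evalQ W q1 S ∪ evalQ W q2 S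
  | .proj V0 q, S => (restrictV V0) '' (evalQ W q S)

/-- The `uctx`-based evaluation `⟦l⟧_W^uctx` of a link path expression. -/
def evalL (W : Web) : LPE → URI → Set URI
  | .eps, u => if (W.adoc u).isSome then {u} else ∅
  | .pat lp, u =>
      {u' | ∃ d, W.adoc u = some d ∧ ∃ t d', W.edge d t u' d' ∧ lpMatch lp u t u'}
  | .seq l1 l2, u => {u'' | ∃ u', u' ∈ evalL W l1 u ∧ u'' ∈ evalL W l2 u'}
  | .alt l1 l2, u => evalL W l1 u ∪ evalL W l2 u
  | .star l, u =>
      {u' | (W.adoc u).isSome ∧ Relation.ReflTransGen (fun a b => b ∈ evalL W l a) u u'}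
  | .test l, u => {u' | u' = u ∧ evalL W l u ≠ ∅}
  | .sub v q, u =>
      {u' | (W.adoc u).isSome ∧ ∃ μ ∈ evalQ W q {u}, μ v = some (.uri u')}
end

/-- Semantic equivalence of LDQL queries. -/
def equivQ (q q' : LDQL) : Prop :=
  ∀ (W : Web) (S : Set URI), S.Finite → evalQ W q S = evalQ W q' S


/-! ### LPEs built only from ε, ⟨?v,q⟩ and (·)* -/

mutual
/-- All LPEs occurring in the query consist only of `ε`, `⟨?v,q⟩` and `(·)*`. -/
def LDQL.simple : LDQL → Prop
  | .base l _ => l.simple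
  | .seedU _ q => q.simple
  | .seedV _ q => q.simple
  | .qand q1 q2 => q1.simple ∧ q2.simple
  | .qunion q1 q2 => q1.simple ∧ q2.simple
  | .proj _ q => q.simple

/-- The LPE consists only of `ε`, `⟨?v,q⟩` and `(·)*`. -/
def LPE.simple : LPE → Prop
  | .eps => True
  | .pat _ => False
  | .seq _ _ => False
  | .alt _ _ => False
  | .star l => l.simple
  | .test _ => False
  | .sub _ q => q.simple
end

/-! ### Property paths under context-based semantics -/

/-- Property path expressions. -/
inductive PP where
  | uri (p : URI)
  | neg (us : List URI)
  | seq (r1 r2 : PP)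
  | alt (r1 r2 : PP)
  | star (r : PP)

/-- Terms allowed in PP-patterns: URIs, literals and variables. -/
inductive PPTerm where
  | uri (u : URI)
  | lit (l : LitId)
  | var (v : Var)

/-- The context selector `C_W`. -/
def CW (W : Web) (a : Obj) : Set RDFTriple :=
  {t | ∃ u d, a = .uri u ∧ W.adoc u = some d ∧ t ∈ W.data d ∧ t.s = .uri u}

/-- The RDF terms occurring in triples of documents of `W`. -/
def termsW (W : Web) : Set Obj :=
  {a | ∃ d ∈ W.docs, ∃ t ∈ W.data d, a = t.s.toObj ∨ a = .uri t.p ∨ a = t.o}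

/-- The binary relation on RDF terms induced by a PP expression under
context-based semantics. -/
def ppRel (W : Web) : PP → Obj → Obj → Prop
  | .uri p, a, b => ∃ s, objToSubj a = some s ∧ (⟨s, p, b⟩ : RDFTriple) ∈ CW W a
  | .neg us, a, b => ∃ p, p ∉ us ∧ ∃ s, objToSubj a = some s ∧ (⟨s, p, b⟩ : RDFTriple) ∈ CW W a
  | .seq r1 r2, a, b => ∃ m, ppRel W r1 a m ∧ ppRel W r2 m b
  | .alt r1 r2, a, b => ppRel W r1 a b ∨ ppRel W r2 a b
  | .star r, a, b => (a = b ∧ a ∈ termsW W) ∨ Relation.TransGen (ppRel W r) a b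

def PPTerm.toPval (μ : Mapping) : PPTerm → Option Obj
  | .uri u => some (.uri u)
  | .lit l => some (.lit l)
  | .var v => μ v

def ppVars (α β : PPTerm) : Set Var := {v | α = .var v ∨ β = .var v}

/-- The context-based evaluation `⟦(α,r,β)⟧_ctxt^W` of a PP-pattern. -/
def ctxtEvalPat (W : Web) (α : PPTerm) (r : PP) (β : PPTerm) : Set Mapping :=
  {μ | mdom μ = ppVars α β ∧
    ∃ a b, α.toPval μ = some a ∧ β.toPval μ = some b ∧ ppRel W r a b}

/-- PP-based SPARQL queries. -/
inductive PPQ where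
  | pat (α : PPTerm) (r : PP) (β : PPTerm)
  | and (R1 R2 : PPQ)
  | union (R1 R2 : PPQ)
  | opt (R1 R2 : PPQ)
  | filter (R : PPQ) (c : Cond)

/-- The context-based evaluation `⟦R⟧_ctxt^W` of a PP-based SPARQL query. -/
def evalPPQ (W : Web) : PPQ → Set Mapping
  | .pat α r β => ctxtEvalPat W α r β
  | .and R1 R2 => mjoin (evalPPQ W R1) (evalPPQ W R2)
  | .union R1 R2 => evalPPQ W R1 ∪ evalPPQ W R2
  | .opt R1 R2 =>
      mjoin (evalPPQ W R1) (evalPPQ W R2) ∪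
        {μ | μ ∈ evalPPQ W R1 ∧ ∀ μ2 ∈ evalPPQ W R2, ¬ compatible μ μ2}
  | .filter R c => {μ | μ ∈ evalPPQ W R ∧ condHolds μ c}

/-! ### NautiLOD -/

/-- NautiLOD expressions (without action rules). -/
inductive NLOD where
  | fwd (p : URI)
  | bwd (p : URI)
  | any
  | seq (n1 n2 : NLOD)
  | alt (n1 n2 : NLOD)
  | star (n : NLOD)
  | ask (n : NLOD) (P : GP)

/-- Dataset used for evaluating an ASK pattern over the data of a single document. -/
def askDS (W : Web) (d : Doc) : RDFDataset :=
  ⟨((W.data d : Finset RDFTriple) : Set RDFTriple), fun _ => none⟩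

/-- NautiLOD semantics `⟦n⟧_W^u`. -/
def nlEval (W : Web) : NLOD → URI → Set URI
  | .fwd p, u => {u' | ∃ d, W.adoc u = some d ∧ (⟨.uri u, p, .uri u'⟩ : RDFTriple) ∈ W.data d}
  | .bwd p, u => {u' | ∃ d, W.adoc u = some d ∧ (⟨.uri u', p, .uri u⟩ : RDFTriple) ∈ W.data d}
  | .any, u => {u' | ∃ d q, W.adoc u = some d ∧ (⟨.uri u, q, .uri u'⟩ : RDFTriple) ∈ W.data d}
  | .seq n1 n2, u =>
      {u'' | ∃ u', u' ∈ nlEval W n1 u ∧ (W.adoc u').isSome ∧ u'' ∈ nlEval W n2 u'}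
  | .alt n1 n2, u => nlEval W n1 u ∪ nlEval W n2 u
  | .star n, u =>
      {u' | Relation.ReflTransGen (fun a b => (W.adoc a).isSome ∧ b ∈ nlEval W n a) u u'}
  | .ask n P, u =>
      {u' | u' ∈ nlEval W n u ∧
        ∃ d, W.adoc u' = some d ∧ evalGP (askDS W d) P ((W.data d : Finset RDFTriple) : Set RDFTriple) ≠ ∅}

/-! ### Variables occurring in patterns and NautiLOD expressions -/

def condHasVar (v : Var) : Cond → Prop
  | .eq a b => a = .var v ∨ b = .var v
  | .neq a b => a = .var v ∨ b = .var v
  | .and c1 c2 => condHasVar v c1 ∨ condHasVar v c2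
  | .or c1 c2 => condHasVar v c1 ∨ condHasVar v c2
  | .not c => condHasVar v c

/-- The variable `v` occurs in the SPARQL graph pattern. -/
def gpHasVar (v : Var) : GP → Prop
  | .empty => False
  | .tp t => t.sj = .var v ∨ t.pr = .var v ∨ t.ob = .var v
  | .and g1 g2 => gpHasVar v g1 ∨ gpHasVar v g2
  | .union g1 g2 => gpHasVar v g1 ∨ gpHasVar v g2
  | .opt g1 g2 => gpHasVar v g1 ∨ gpHasVar v g2
  | .filter g c => gpHasVar v g ∨ condHasVar v c
  | .graphU _ g => gpHasVar v g
  | .graphV w g => v = w ∨ gpHasVar v g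
  | .bind g _ w => v = w ∨ gpHasVar v g

/-- The variable `v` occurs in the NautiLOD expression. -/
def nlodHasVar (v : Var) : NLOD → Prop
  | .fwd _ => False
  | .bwd _ => False
  | .any => False
  | .seq n1 n2 => nlodHasVar v n1 ∨ nlodHasVar v n2
  | .alt n1 n2 => nlodHasVar v n1 ∨ nlodHasVar v n2
  | .star n => nlodHasVar v n
  | .ask n P => nlodHasVar v n ∨ gpHasVar v P

/-! ### Reachability-based query semantics -/

/-- A reachability criterion. -/
def ReachCrit := RDFTriple → URI → GP → Prop

def cAll : ReachCrit := fun _ _ _ => True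

def cNone : ReachCrit := fun _ _ _ => False

/-- The list of triple patterns occurring in a SPARQL graph pattern. -/
def GP.tps : GP → List TriplePattern
  | .empty => []
  | .tp t => [t]
  | .and g1 g2 => g1.tps ++ g2.tps
  | .union g1 g2 => g1.tps ++ g2.tps
  | .opt g1 g2 => g1.tps ++ g2.tps
  | .filter g _ => g.tps
  | .graphU _ g => g.tps
  | .graphV _ g => g.tps
  | .bind g _ _ => g.tps

def cMatch : ReachCrit := fun t _ P => ∃ (μ : Mapping) (tp : TriplePattern),
  tp ∈ P.tps ∧ tpInst μ tp = some t

/-- `(c,S,P)`-reachability of a document in `W`. -/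
inductive Reachable (W : Web) (c : ReachCrit) (S : Set URI) (P : GP) : Doc → Prop where
  | seed (u : URI) (d : Doc) : u ∈ S → W.adoc u = some d → Reachable W c S P d
  | step (dsrc : Doc) (t : RDFTriple) (u : URI) (d : Doc) :
      Reachable W c S P dsrc → W.edge dsrc t u d → c t u P → Reachable W c S P d

/-- The RDF graph consisting of all triples of all `(c,S,P)`-reachable documents. -/
def reachGraph (W : Web) (c : ReachCrit) (S : Set URI) (P : GP) : Set RDFTriple :=
  {t | ∃ d, Reachable W c S P d ∧ t ∈ W.data d}

/-- The S-based evaluation of `P` over `W` under `c`-semantics. -/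
def reachEval (W : Web) (c : ReachCrit) (S : Set URI) (P : GP) : Set Mapping :=
  evalGP ⟨reachGraph W c S P, fun _ => none⟩ P (reachGraph W c S P)

/-! ### Constructions used in Theorems on c_Match and NautiLOD -/

def addFilter (v : Var) (pt : PTerm) (g : GP) : GP :=
  match pt with
  | .var _ => g
  | .term o => .filter g (.eq (.var v) (.term o))

/-- The basic LDQL query `q_k = ⟨ε,P_k⟩` associated with a triple pattern. -/
def matchQ (vs vp vo : Var) (t : TriplePattern) : LDQL :=
  .base .eps (addFilter vo t.ob (addFilter vp t.pr (addFilter vs t.sj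
    (.tp ⟨.var vs, .var vp, .var vo⟩))))

/-- An LPE whose evaluation is empty everywhere. -/
def emptyLPE (v : Var) : LPE := .sub v (.base .eps .empty)

/-- The LPE `l_Match` associated with a SPARQL graph pattern. -/
def lMatch (vs vp vo : Var) (P : GP) : LPE :=
  .star ((P.tps.map (fun t =>
      LPE.alt (.sub vs (matchQ vs vp vo t))
        (LPE.alt (.sub vp (matchQ vs vp vo t)) (.sub vo (matchQ vs vp vo t))))).foldr
    LPE.alt (emptyLPE vs))

/-- The translation `trans_N` from NautiLOD expressions to LPEs, using the
(fresh, pairwise distinct) variables `vx`, `vu`, `vp`. -/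
def transN (vx vu vp : Var) : NLOD → LPE
  | .fwd p => .pat ⟨.plus, .uri p, .star⟩
  | .bwd p => .pat ⟨.star, .uri p, .plus⟩
  | .any => .sub vx (.base .eps (.graphV vu (.tp ⟨.var vu, .var vp, .var vx⟩)))
  | .seq n1 n2 => .seq (transN vx vu vp n1) (transN vx vu vp n2)
  | .alt n1 n2 => .alt (transN vx vu vp n1) (transN vx vu vp n2)
  | .star n => .star (transN vx vu vp n)
  | .ask n P => .seq (transN vx vu vp n) (.test (.sub vx (.base .eps (.graphV vx P))))


/-!
Each property path `r` is translated into a query `ppQ r x y` whose solutions are exactly the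
mappings `?x ↦ a, ?y ↦ b` with `(a, b)` in the context-based relation of `r`. An atom is read off
the document of a URI `u` through `SEED ?x`, which pins the subject to `u`; sequence and
alternative become join-then-project and union. For `r*`, the reflexive part is the identity on the
terms of the Web, collected by triple patterns in every position. For the transitive part, every
non-trivial `r`-step starts at a URI that has a document, so a path is a first step, a chain of such
URIs, and a last step; the chain is followed by the link path expression `⟨?y, q⟩*`, where `q` is
the translation of `r` evaluated from its seed. Finally, a PP-pattern `(α, r, β)` is `ppQ r x y`
for fresh `x`, `y`, joined with queries binding `x` to `α` and `y` to `β`, and projected to the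
variables of the pattern.
-/


lemma mem_mdom {μ : Mapping} {v : Var} : v ∈ mdom μ ↔ μ v ≠ none := Iff.rfl

lemma notMem_mdom {μ : Mapping} {v : Var} : v ∉ mdom μ ↔ μ v = none := not_not

lemma munion_apply (μ1 μ2 : Mapping) (v : Var) : munion μ1 μ2 v = (μ1 v).or (μ2 v) := by
  unfold munion
  cases μ1 v <;> rfl

lemma mdom_munion (μ1 μ2 : Mapping) : mdom (munion μ1 μ2) = mdom μ1 ∪ mdom μ2 := by
  ext v
  simp only [Set.mem_union, mem_mdom, munion_apply]
  cases μ1 v <;> simp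

lemma mdom_restrictV (V : Finset Var) (μ : Mapping) : mdom (restrictV V μ) = ↑V ∩ mdom μ := by
  ext v
  by_cases hv : v ∈ V <;> simp [mem_mdom, restrictV, hv]

lemma mdom_update (μ : Mapping) (m : Var) (b : Obj) :
    mdom (Function.update μ m (some b)) = insert m (mdom μ) := by
  ext v
  by_cases hv : v = m <;> simp [mem_mdom, hv]

lemma mdom_single (v : Var) (o : Obj) : mdom (single v o) = {v} := by
  ext w
  simp [mem_mdom, single]

lemma restrictV_of_mdom_subset {μ : Mapping} {V : Finset Var} (h : mdom μ ⊆ ↑V) :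
    restrictV V μ = μ := by
  funext v
  by_cases hv : v ∈ V
  · simp [restrictV, hv]
  · have : v ∉ mdom μ := fun hm => hv (h hm)
    simp [restrictV, hv, notMem_mdom.1 this]

lemma restrictV_restrictV {V E : Finset Var} (h : V ⊆ E) (μ : Mapping) :
    restrictV V (restrictV E μ) = restrictV V μ := by
  funext v
  by_cases hv : v ∈ V
  · simp [restrictV, hv, h hv]
  · simp [restrictV, hv]

lemma restrictV_munion_left {μ1 μ2 : Mapping} {V : Finset Var} (h : mdom μ1 = ↑V) :
    restrictV V (munion μ1 μ2) = μ1 := by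
  funext v
  by_cases hv : v ∈ V
  · obtain ⟨a, ha⟩ := Option.ne_none_iff_exists'.1 (mem_mdom.1 (h ▸ hv : v ∈ mdom μ1))
    simp [restrictV, hv, munion_apply, ha]
  · have : v ∉ mdom μ1 := h ▸ hv
    simp [restrictV, hv, notMem_mdom.1 this]

lemma restrictV_munion_right {μ1 μ2 : Mapping} {V : Finset Var} (hc : compatible μ1 μ2)
    (h : mdom μ2 = ↑V) : restrictV V (munion μ1 μ2) = μ2 := by
  funext v
  by_cases hv : v ∈ V
  · obtain ⟨b, hb⟩ := Option.ne_none_iff_exists'.1 (mem_mdom.1 (h ▸ hv : v ∈ mdom μ2))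
    cases ha : μ1 v with
    | none => simp [restrictV, hv, munion_apply, ha]
    | some a => simp [restrictV, hv, munion_apply, ha, hb, hc v a b ha hb]
  · have : v ∉ mdom μ2 := h ▸ hv
    simp [restrictV, hv, notMem_mdom.1 this]

lemma munion_restrictV {μ : Mapping} {V E : Finset Var} (h : mdom μ ⊆ ↑(V ∪ E)) :
    munion (restrictV V μ) (restrictV E μ) = μ := by
  funext v
  by_cases hV : v ∈ V
  · cases hμ : μ v <;> simp [munion_apply, restrictV, hV, hμ]
  by_cases hE : v ∈ E
  · simp [munion_apply, restrictV, hV, hE]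
  · have : v ∉ mdom μ := fun hm => by simpa [hV, hE] using h hm
    simp [munion_apply, restrictV, hV, hE, notMem_mdom.1 this]

lemma compatible_restrictV (V E : Finset Var) (μ : Mapping) :
    compatible (restrictV V μ) (restrictV E μ) := by
  intro v a b ha hb
  simp only [restrictV] at ha hb
  split_ifs at ha hb
  exact Option.some_inj.1 (ha.symm.trans hb)

def solutions (D : Finset Var) (P : Mapping → Prop) : Set Mapping := {μ | mdom μ = ↑D ∧ P μ}

lemma solutions_congr {D : Finset Var} {P Q : Mapping → Prop}
    (h : ∀ μ, mdom μ = ↑D → (P μ ↔ Q μ)) : solutions D P = solutions D Q := by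
  ext μ
  exact and_congr_right (h μ)

lemma solutions_union (D : Finset Var) (P Q : Mapping → Prop) :
    solutions D P ∪ solutions D Q = solutions D fun μ => P μ ∨ Q μ := by
  ext μ
  simp only [solutions, Set.mem_union, Set.mem_ofPred_eq, and_or_left]

lemma iUnion_solutions {ι : Type*} (D : Finset Var) (P : ι → Mapping → Prop) :
    ⋃ i, solutions D (P i) = solutions D fun μ => ∃ i, P i μ := by
  ext μ
  simp only [solutions, Set.mem_iUnion, Set.mem_ofPred_eq, exists_and_left]

lemma sep_solutions (D : Finset Var) (P Q : Mapping → Prop) :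
    {μ | μ ∈ solutions D P ∧ Q μ} = solutions D fun μ => P μ ∧ Q μ :=
  Set.ext fun _ => and_assoc

lemma singleton_single (v : Var) (o : Obj) :
    {single v o} = solutions {v} fun μ => μ v = some o := by
  ext μ
  simp only [solutions, Set.mem_singleton_iff, Set.mem_ofPred_eq, Finset.coe_singleton]
  constructor
  · rintro rfl
    exact ⟨mdom_single v o, by simp [single]⟩
  · rintro ⟨hdom, hv⟩
    funext w
    by_cases hw : w = v
    · subst hw; simp [single, hv]
    · have : w ∉ mdom μ := by simp [hdom, hw]
      simpa [single, hw, mem_mdom] using this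

lemma mjoin_solutions (D1 D2 : Finset Var) (P1 P2 : Mapping → Prop) :
    mjoin (solutions D1 P1) (solutions D2 P2) =
      solutions (D1 ∪ D2) fun μ => P1 (restrictV D1 μ) ∧ P2 (restrictV D2 μ) := by
  ext μ
  constructor
  · rintro ⟨μ1, ⟨h1, p1⟩, μ2, ⟨h2, p2⟩, hc, rfl⟩
    refine ⟨by rw [mdom_munion, h1, h2, Finset.coe_union], ?_, ?_⟩
    · rwa [restrictV_munion_left h1]
    · rwa [restrictV_munion_right hc h2]
  · rintro ⟨hdom, p1, p2⟩
    have hsub : ∀ D : Finset Var, D ⊆ D1 ∪ D2 → mdom (restrictV D μ) = ↑D := fun D hD => by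
      rw [mdom_restrictV, hdom, Set.inter_eq_left]
      exact_mod_cast hD
    exact ⟨restrictV D1 μ, ⟨hsub D1 Finset.subset_union_left, p1⟩,
      restrictV D2 μ, ⟨hsub D2 Finset.subset_union_right, p2⟩,
      compatible_restrictV D1 D2 μ, (munion_restrictV hdom.subset).symm⟩

lemma image_restrictV_solutions_insert {V D : Finset Var} {m : Var} (hm : m ∉ D) (hV : V ⊆ D)
    (P : Mapping → Prop) :
    restrictV V '' solutions (insert m D) P =
      restrictV V '' solutions D fun ν => ∃ b, P (Function.update ν m (some b)) := by
  ext ν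
  constructor
  · rintro ⟨μ, ⟨hdom, hP⟩, rfl⟩
    obtain ⟨b, hb⟩ := Option.ne_none_iff_exists'.1
      (mem_mdom.1 (hdom ▸ by simp : m ∈ mdom μ))
    have hμ : Function.update (restrictV D μ) m (some b) = μ := by
      funext v
      by_cases hv : v = m
      · subst hv; simp [hb]
      · by_cases hD : v ∈ D
        · simp [restrictV, hv, hD]
        · have : v ∉ mdom μ := by simp [hdom, hv, hD]
          simp [restrictV, hv, hD, notMem_mdom.1 this]
    refine ⟨restrictV D μ, ⟨?_, b, hμ.symm ▸ hP⟩, restrictV_restrictV hV μ⟩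
    rw [mdom_restrictV, hdom, Finset.coe_insert, Set.inter_eq_left]
    exact Set.subset_insert _ _
  · rintro ⟨μ, ⟨hdom, b, hP⟩, rfl⟩
    refine ⟨Function.update μ m (some b), ⟨by rw [mdom_update, hdom, Finset.coe_insert], hP⟩, ?_⟩
    funext v
    by_cases hv : v ∈ V
    · have : v ≠ m := fun h => hm (h ▸ hV hv)
      simp [restrictV, hv, this]
    · simp [restrictV, hv]

lemma image_restrictV_solutions (V : Finset Var) (P : Mapping → Prop) :
    restrictV V '' solutions V P = solutions V P := by
  refine Set.image_congr (fun μ hμ => restrictV_of_mdom_subset hμ.1.subset) |>.trans ?_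
  exact Set.image_id _


theorem _root_.Relation.TransGen.src_of_ne {α : Type*} {R : α → α → Prop} {Q : α → Prop}
    (hR : ∀ a b, R a b → a ≠ b → Q a) {a b : α} (h : Relation.TransGen R a b) (hab : a ≠ b) :
    Q a := by
  induction h using Relation.TransGen.head_induction_on with
  | single h => exact hR _ _ h hab
  | head h _ ih =>
    rename_i a c _
    by_cases hac : a = c
    · subst hac; exact ih hab
    · exact hR _ _ h hac

theorem _root_.Relation.transGen_iff_of_ne {α β : Type*} {R : α → α → Prop} {f : β → α}
    {P : β → Prop} (hR : ∀ a b, R a b → a ≠ b → ∃ u, P u ∧ a = f u) {a b : α} :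
    Relation.TransGen R a b ↔ R a b ∨ Relation.Comp R (Relation.Comp
      (fun c c' => ∃ u u', c = f u ∧ c' = f u' ∧ P u ∧ P u' ∧
        Relation.ReflTransGen (fun u u' => P u ∧ R (f u) (f u')) u u') R) a b := by
  constructor
  · intro h
    induction h with
    | single h => exact Or.inl h
    | tail _ hcb ih =>
      rename_i c b _
      by_cases hc : c = b
      · exact hc ▸ ih
      obtain ⟨w, hw, rfl⟩ := hR _ _ hcb hc
      rcases ih with hac | ⟨c1, hac1, c2, ⟨u, u', rfl, rfl, hu, hu', hpath⟩, hlast⟩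
      · exact Or.inr ⟨f w, hac, f w, ⟨w, w, rfl, rfl, hw, hw, .refl⟩, hcb⟩
      · exact Or.inr ⟨f u, hac1, f w, ⟨u, w, rfl, rfl, hu, hw, hpath.tail ⟨hu', hlast⟩⟩, hcb⟩
  · rintro (h | ⟨c1, h1, c2, ⟨u, u', rfl, rfl, -, -, hpath⟩, h2⟩)
    · exact .single h
    · exact (Relation.TransGen.head' h1 (hpath.lift f fun _ _ h => h.2)).tail h2

/-- `(a, p, b) ∈ C_W(a)` for some `p` with `allowed p`: the atoms `p` and `!(u₁|…|uₖ)`. -/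
def contextEdge (W : Web) (allowed : URI → Prop) (a b : Obj) : Prop :=
  ∃ u d p, a = .uri u ∧ W.adoc u = some d ∧ allowed p ∧ (⟨.uri u, p, b⟩ : RDFTriple) ∈ W.data d

lemma objToSubj_eq_some {a : Obj} {s : Subj} : objToSubj a = some s ↔ a = s.toObj := by
  cases a <;> cases s <;> simp [objToSubj, Subj.toObj]

lemma Subj.toObj_eq_uri {s : Subj} {u : URI} : s.toObj = .uri u ↔ s = .uri u := by
  cases s <;> simp [Subj.toObj]

lemma ppRel_uri (W : Web) (p : URI) : ppRel W (.uri p) = contextEdge W (· = p) := by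
  funext a b
  simp only [ppRel, CW, contextEdge, Set.mem_ofPred_eq, objToSubj_eq_some]
  apply propext
  constructor
  · rintro ⟨s, rfl, u, d, hu, hd, hmem, rfl⟩
    exact ⟨u, d, p, hu, hd, rfl, hmem⟩
  · rintro ⟨u, d, _, rfl, hd, rfl, hmem⟩
    exact ⟨.uri u, rfl, u, d, rfl, hd, hmem, rfl⟩

lemma ppRel_neg (W : Web) (us : List URI) : ppRel W (.neg us) = contextEdge W (· ∉ us) := by
  funext a b
  simp only [ppRel, CW, contextEdge, Set.mem_ofPred_eq, objToSubj_eq_some]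
  apply propext
  constructor
  · rintro ⟨p, hp, s, rfl, u, d, hu, hd, hmem, rfl⟩
    exact ⟨u, d, p, hu, hd, hp, hmem⟩
  · rintro ⟨u, d, p, rfl, hd, hp, hmem⟩
    exact ⟨p, hp, .uri u, rfl, u, d, rfl, hd, hmem, rfl⟩

lemma contextEdge_src {W : Web} {A : URI → Prop} {a b : Obj} (h : contextEdge W A a b) :
    ∃ u, (W.adoc u).isSome ∧ a = .uri u := by
  obtain ⟨u, d, _, rfl, hd, _⟩ := h
  exact ⟨u, by simp [hd], rfl⟩

lemma contextEdge_mem_termsW {W : Web} {A : URI → Prop} {a b : Obj}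
    (h : contextEdge W A a b) : a ∈ termsW W ∧ b ∈ termsW W := by
  obtain ⟨u, d, p, rfl, hd, _, hmem⟩ := h
  have hdoc := W.adoc_mem u d hd
  exact ⟨⟨d, hdoc, _, hmem, Or.inl rfl⟩, ⟨d, hdoc, _, hmem, Or.inr (Or.inr rfl)⟩⟩

lemma ppRel_src (W : Web) (r : PP) :
    ∀ a b, ppRel W r a b → a ≠ b → ∃ u, (W.adoc u).isSome ∧ a = .uri u := by
  induction r with
  | uri p => rw [ppRel_uri]; exact fun _ _ h _ => contextEdge_src h
  | neg us => rw [ppRel_neg]; exact fun _ _ h _ => contextEdge_src h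
  | seq r1 r2 ih1 ih2 =>
    rintro a b ⟨m, h1, h2⟩ hab
    by_cases ham : a = m
    · subst ham; exact ih2 _ _ h2 hab
    · exact ih1 _ _ h1 ham
  | alt r1 r2 ih1 ih2 =>
    rintro a b (h | h) hab
    exacts [ih1 _ _ h hab, ih2 _ _ h hab]
  | star r ih =>
    rintro a b (⟨rfl, -⟩ | h) hab
    · exact absurd rfl hab
    · exact h.src_of_ne ih hab

lemma ppRel_mem_termsW (W : Web) (r : PP) :
    ∀ a b, ppRel W r a b → a ∈ termsW W ∧ b ∈ termsW W := by
  induction r with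
  | uri p => rw [ppRel_uri]; exact fun _ _ => contextEdge_mem_termsW
  | neg us => rw [ppRel_neg]; exact fun _ _ => contextEdge_mem_termsW
  | seq r1 r2 ih1 ih2 =>
    rintro a b ⟨m, h1, h2⟩
    exact ⟨(ih1 _ _ h1).1, (ih2 _ _ h2).2⟩
  | alt r1 r2 ih1 ih2 =>
    rintro a b (h | h)
    exacts [ih1 _ _ h, ih2 _ _ h]
  | star r ih =>
    rintro a b (⟨rfl, h⟩ | h)
    · exact ⟨h, h⟩
    · obtain ⟨c, h1, -⟩ := Relation.TransGen.head'_iff.1 h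
      obtain ⟨c', -, h2⟩ := Relation.TransGen.tail'_iff.1 h
      exact ⟨(ih _ _ h1).1, (ih _ _ h2).2⟩

section Evaluation

variable (W : Web)

lemma objToURI_eq_some {a : Obj} {p : URI} : objToURI a = some p ↔ a = .uri p := by
  cases a <;> simp [objToURI]

lemma tpInst_eq_some {μ : Mapping} {T : TriplePattern} {tr : RDFTriple} :
    tpInst μ T = some tr ↔
      pval μ T.sj = some tr.s.toObj ∧ pval μ T.pr = some (.uri tr.p) ∧ pval μ T.ob = some tr.o := by
  obtain ⟨s, p, o⟩ := tr
  simp only [tpInst, bind, pure, Option.bind_eq_some_iff, Option.some.injEq, objToSubj_eq_some,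
    objToURI_eq_some, RDFTriple.mk.injEq]
  constructor
  · rintro ⟨_, h1, s', rfl, _, h2, p', rfl, o', h3, rfl, rfl, rfl⟩
    exact ⟨h1, h2, h3⟩
  · rintro ⟨h1, h2, h3⟩
    exact ⟨_, h1, s, rfl, _, h2, p, rfl, o, h3, rfl, rfl, rfl⟩

lemma evalGP_tp_vars (D : RDFDataset) (G : Set RDFTriple) (x y z : Var) :
    evalGP D (.tp ⟨.var x, .var y, .var z⟩) G = solutions {x, y, z} fun μ =>
      ∃ tr ∈ G, μ x = some tr.s.toObj ∧ μ y = some (.uri tr.p) ∧ μ z = some tr.o := by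
  have hvars : (⟨.var x, .var y, .var z⟩ : TriplePattern).varsOf = ↑({x, y, z} : Finset Var) := by
    ext v
    simp only [TriplePattern.varsOf, PTerm.varsOf, Set.mem_union, Set.mem_singleton_iff,
      Finset.coe_insert, Finset.coe_singleton, Set.mem_insert_iff]
    tauto
  ext μ
  simp only [evalGP, solutions, Set.mem_ofPred_eq, hvars, tpInst_eq_some, pval]

lemma datasetW_named_eq_some {U : Set URI} {u : URI} {G : Set RDFTriple} :
    (datasetW W U).named u = some G ↔ u ∈ U ∧ ∃ d, W.adoc u = some d ∧ G = ↑(W.data d) := by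
  by_cases hu : u ∈ U
  · simp [datasetW, hu, eq_comm]
  · simp [datasetW, hu]

lemma evalGP_graphV_empty (U : Set URI) (G : Set RDFTriple) (x : Var) :
    evalGP (datasetW W U) (.graphV x .empty) G =
      solutions {x} fun μ => ∃ u ∈ U, (W.adoc u).isSome ∧ μ x = some (.uri u) := by
  have hsingle : ∀ u, munion emptyMap (single x (.uri u)) = single x (.uri u) := fun u => by
    funext v; simp [munion_apply, emptyMap]
  have hcompat : ∀ o, compatible emptyMap (single x o) := fun _ _ _ _ h => by
    simp [emptyMap] at h
  trans ⋃ u ∈ {u | u ∈ U ∧ (W.adoc u).isSome}, {single x (.uri u)}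
  · ext μ
    simp only [evalGP, datasetW_named_eq_some, Set.mem_singleton_iff, Set.mem_iUnion,
      Set.mem_ofPred_eq, exists_prop]
    constructor
    · rintro ⟨u, _, ⟨hu, d, hd, rfl⟩, _, rfl, -, rfl⟩
      exact ⟨u, ⟨hu, by simp [hd]⟩, hsingle u⟩
    · rintro ⟨u, ⟨hu, hs⟩, rfl⟩
      obtain ⟨d, hd⟩ := Option.isSome_iff_exists.1 hs
      exact ⟨u, _, ⟨hu, d, hd, rfl⟩, emptyMap, rfl, hcompat _, (hsingle u).symm⟩
  · ext μ
    simp only [singleton_single, solutions, Set.mem_iUnion, Set.mem_ofPred_eq, exists_prop]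
    constructor
    · rintro ⟨u, ⟨hu, hs⟩, hdom, hx⟩
      exact ⟨hdom, u, hu, hs, hx⟩
    · rintro ⟨hdom, u, hu, hs, hx⟩
      exact ⟨u, ⟨hu, hs⟩, hdom, hx⟩

lemma evalL_eps (u : URI) : evalL W .eps u = {u' | (W.adoc u).isSome ∧ u' = u} := by
  ext u'
  by_cases hs : (W.adoc u).isSome <;> simp [evalL, hs]

lemma evalQ_base_singleton (l : LPE) (P : GP) (u : URI) :
    evalQ W (.base l P) {u} =
      evalGP (datasetW W (evalL W l u)) P (datasetW W (evalL W l u)).dflt := by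
  simp only [evalQ, Set.mem_singleton_iff, exists_eq_left, Set.ofPred_mem_eq]

lemma dflt_datasetW_evalL_eps (u : URI) :
    (datasetW W (evalL W .eps u)).dflt = {t | ∃ d, W.adoc u = some d ∧ t ∈ W.data d} := by
  ext t
  simp only [datasetW, evalL_eps, Set.mem_ofPred_eq]
  constructor
  · rintro ⟨_, ⟨-, rfl⟩, h⟩
    exact h
  · rintro ⟨d, hd, ht⟩
    exact ⟨u, ⟨by simp [hd], rfl⟩, d, hd, ht⟩

lemma evalQ_seedV_solutions {q : LDQL} {D : Finset Var} {P : URI → Mapping → Prop}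
    (h : ∀ u, evalQ W q {u} = solutions D (P u)) (v : Var) (S : Set URI) :
    evalQ W (.seedV v q) S =
      solutions (D ∪ {v}) fun μ => ∃ u, P u (restrictV D μ) ∧ μ v = some (.uri u) := by
  simp only [evalQ, h, singleton_single, mjoin_solutions, iUnion_solutions]
  exact solutions_congr fun μ _ => by simp [restrictV]

def relSolutions (x y : Var) (R : Obj → Obj → Prop) : Set Mapping :=
  solutions {x, y} fun μ => ∃ a b, μ x = some a ∧ μ y = some b ∧ R a b

lemma relSolutions_union (x y : Var) (R1 R2 : Obj → Obj → Prop) :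
    relSolutions x y R1 ∪ relSolutions x y R2 = relSolutions x y (R1 ⊔ R2) := by
  rw [relSolutions, relSolutions, solutions_union]
  refine solutions_congr fun μ _ => ?_
  simp only [Pi.sup_apply, sup_Prop_eq]
  constructor
  · rintro (⟨a, b, ha, hb, h⟩ | ⟨a, b, ha, hb, h⟩)
    exacts [⟨a, b, ha, hb, .inl h⟩, ⟨a, b, ha, hb, .inr h⟩]
  · rintro ⟨a, b, ha, hb, h | h⟩
    exacts [.inl ⟨a, b, ha, hb, h⟩, .inr ⟨a, b, ha, hb, h⟩]

lemma evalQ_comp {q1 q2 : LDQL} {x m y : Var} (hxm : x ≠ m) (hmy : m ≠ y) {S : Set URI}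
    {R1 R2 : Obj → Obj → Prop} (h1 : evalQ W q1 S = relSolutions x m R1)
    (h2 : evalQ W q2 S = relSolutions m y R2) :
    evalQ W (.proj {x, y} (.qand q1 q2)) S = relSolutions x y (Relation.Comp R1 R2) := by
  have hD : ({x, m} ∪ {m, y} : Finset Var) = insert m {x, y} := by
    ext; simp only [Finset.mem_union, Finset.mem_insert, Finset.mem_singleton]; tauto
  simp only [evalQ, h1, h2, relSolutions, mjoin_solutions, hD]
  rw [image_restrictV_solutions_insert (by simp [hxm.symm, hmy]) subset_rfl,
    image_restrictV_solutions]
  refine solutions_congr fun ν _ => ?_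
  simp only [restrictV, Finset.mem_insert, Finset.mem_singleton, hxm, or_false, ↓reduceIte, ne_eq,
    not_false_eq_true, Function.update_of_ne, or_true, Function.update_self, Option.some.injEq,
    exists_and_left, ↓existsAndEq, true_and, true_or, hmy.symm, exists_eq_left', Relation.Comp]
  constructor
  · rintro ⟨b, ⟨a, ha, h1⟩, c, hc, h2⟩
    exact ⟨a, ha, c, hc, b, h1, h2⟩
  · rintro ⟨a, ha, c, hc, b, h1, h2⟩
    exact ⟨b, ⟨a, ha, h1⟩, c, hc, h2⟩

end Evaluation

section Queries

variable (W : Web)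

def fresh (x y : Var) (k : ℕ) : Var := x + y + k + 1

lemma left_ne_fresh (x y : Var) (k : ℕ) : x ≠ fresh x y k := by
  unfold fresh Var at *; omega

lemma right_ne_fresh (x y : Var) (k : ℕ) : y ≠ fresh x y k := by
  unfold fresh Var at *; omega

lemma fresh_ne_fresh (x y : Var) {k l : ℕ} (h : k ≠ l) : fresh x y k ≠ fresh x y l := by
  unfold fresh Var at *; omega

lemma condHolds_eq_uri {μ : Mapping} {z : Var} {p q : URI} (hz : μ z = some (.uri q)) :
    condHolds μ (.eq (.var z) (.term (.uri p))) ↔ q = p := by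
  simp [condHolds, pval, hz, eq_comm]

/-- `?z ∉ us`, with `?z = ?z` playing the role of `true`. -/
def negCond (z : Var) (us : List URI) : Cond :=
  us.foldr (fun u c => .and (.neq (.var z) (.term (.uri u))) c) (.eq (.var z) (.var z))

lemma condHolds_negCond {μ : Mapping} {z : Var} {q : URI} (hz : μ z = some (.uri q))
    (us : List URI) : condHolds μ (negCond z us) ↔ q ∉ us := by
  induction us with
  | nil => simp [negCond, condHolds, pval, hz]
  | cons u us ih =>
    simp only [negCond, List.foldr_cons] at ih ⊢
    simp [condHolds, pval, hz, ih]

def atomQ (c : Cond) (x y : Var) : LDQL :=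
  .proj {x, y} (.seedV x (.base .eps (.filter (.tp ⟨.var x, .var (fresh x y 0), .var y⟩) c)))

lemma evalQ_atomQ {c : Cond} {A : URI → Prop} {x y : Var} (hxy : x ≠ y)
    (hc : ∀ μ p, μ (fresh x y 0) = some (.uri p) → (condHolds μ c ↔ A p)) (S : Set URI) :
    evalQ W (atomQ c x y) S = relSolutions x y (contextEdge W A) := by
  have hxz := left_ne_fresh x y 0
  have hyz := right_ne_fresh x y 0
  have hbase : ∀ u, evalQ W (.base .eps (.filter (.tp ⟨.var x, .var (fresh x y 0), .var y⟩) c)) {u}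
      = solutions {x, fresh x y 0, y} fun μ => (∃ tr, (∃ d, W.adoc u = some d ∧ tr ∈ W.data d) ∧
          μ x = some tr.s.toObj ∧ μ (fresh x y 0) = some (.uri tr.p) ∧ μ y = some tr.o ∧
          A tr.p) := fun u => by
    rw [evalQ_base_singleton, evalGP, evalGP_tp_vars, dflt_datasetW_evalL_eps, sep_solutions]
    refine solutions_congr fun μ _ => ⟨?_, ?_⟩
    · rintro ⟨⟨tr, htr, hx, hz, hy⟩, hcond⟩
      exact ⟨tr, htr, hx, hz, hy, (hc μ _ hz).1 hcond⟩
    · rintro ⟨tr, htr, hx, hz, hy, hA⟩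
      exact ⟨⟨tr, htr, hx, hz, hy⟩, (hc μ _ hz).2 hA⟩
  have hD : ({x, fresh x y 0, y} ∪ {x} : Finset Var) = insert (fresh x y 0) {x, y} := by
    ext; simp only [Finset.mem_union, Finset.mem_insert, Finset.mem_singleton]; tauto
  rw [atomQ, evalQ, evalQ_seedV_solutions W hbase, hD,
    image_restrictV_solutions_insert (by simp [hxz.symm, hyz.symm]) subset_rfl,
    image_restrictV_solutions]
  refine solutions_congr fun ν _ => ?_
  simp only [restrictV, Finset.mem_insert, hxz, Finset.mem_singleton, hxy, or_self, or_false,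
    ↓reduceIte, ne_eq, not_false_eq_true, Function.update_of_ne, hxz.symm, hyz.symm, or_true,
    Function.update_self, Option.some.injEq, hxy.symm, hyz, ↓existsAndEq, true_and,
    exists_and_right, contextEdge, exists_and_left]
  constructor
  · rintro ⟨u, ⟨⟨s, p, o⟩, ⟨d, hd, hmem⟩, hs, ho, hA⟩, hu⟩
    obtain rfl : s = .uri u := Subj.toObj_eq_uri.1 (Option.some_inj.1 (hs.symm.trans hu))
    exact ⟨o, u, hu, ho, d, hd, p, hA, hmem⟩
  · rintro ⟨b, u, hu, hb, d, hd, p, hA, hmem⟩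
    exact ⟨u, ⟨⟨.uri u, p, b⟩, ⟨d, hd, hmem⟩, hu, hb, hA⟩, hu⟩

def termGP (t c1 c2 : Var) : GP :=
  .union (.tp ⟨.var t, .var c1, .var c2⟩)
    (.union (.tp ⟨.var c1, .var t, .var c2⟩) (.tp ⟨.var c1, .var c2, .var t⟩))

lemma evalGP_termGP (D : RDFDataset) (G : Set RDFTriple) (t c1 c2 : Var) :
    evalGP D (termGP t c1 c2) G = solutions {t, c1, c2} fun μ => ∃ tr ∈ G,
      (μ t = some tr.s.toObj ∧ μ c1 = some (.uri tr.p) ∧ μ c2 = some tr.o) ∨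
      (μ c1 = some tr.s.toObj ∧ μ t = some (.uri tr.p) ∧ μ c2 = some tr.o) ∨
      (μ c1 = some tr.s.toObj ∧ μ c2 = some (.uri tr.p) ∧ μ t = some tr.o) := by
  have h1 : ({c1, t, c2} : Finset Var) = {t, c1, c2} := Finset.insert_comm _ _ _
  have h2 : ({c1, c2, t} : Finset Var) = {t, c1, c2} := by
    rw [Finset.pair_comm c2 t, Finset.insert_comm]
  change evalGP D (.tp _) G ∪ (evalGP D (.tp _) G ∪ evalGP D (.tp _) G) = _
  rw [evalGP_tp_vars, evalGP_tp_vars, evalGP_tp_vars, h1, h2, solutions_union, solutions_union]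
  refine solutions_congr fun μ _ => ?_
  simp only [← exists_or, ← and_or_left]

def idQ (x y : Var) : LDQL :=
  .proj {x, y} (.seedV (fresh x y 0) (.base .eps
    (.filter (.and (termGP x (fresh x y 1) (fresh x y 2)) (termGP y (fresh x y 1) (fresh x y 2)))
      (.eq (.var x) (.var y)))))

lemma evalQ_idQ {x y : Var} (hxy : x ≠ y) (S : Set URI) :
    evalQ W (idQ x y) S = relSolutions x y fun a b => a = b ∧ a ∈ termsW W := by
  have hx0 := left_ne_fresh x y 0
  have hx1 := left_ne_fresh x y 1
  have hx2 := left_ne_fresh x y 2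
  have hy0 := right_ne_fresh x y 0
  have hy1 := right_ne_fresh x y 1
  have hy2 := right_ne_fresh x y 2
  have h01 := fresh_ne_fresh x y (show 0 ≠ 1 by decide)
  have h02 := fresh_ne_fresh x y (show 0 ≠ 2 by decide)
  have h12 := fresh_ne_fresh x y (show 1 ≠ 2 by decide)
  have hD : ({x, fresh x y 1, fresh x y 2} ∪ {y, fresh x y 1, fresh x y 2} ∪ {fresh x y 0} :
      Finset Var) = insert (fresh x y 0) (insert (fresh x y 1) (insert (fresh x y 2) {x, y})) := by
    ext; simp only [Finset.mem_union, Finset.mem_insert, Finset.mem_singleton]; tauto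
  rw [idQ, evalQ, evalQ_seedV_solutions W (fun u => by
    rw [evalQ_base_singleton, evalGP, evalGP, evalGP_termGP, evalGP_termGP, mjoin_solutions,
      sep_solutions]), hD,
    image_restrictV_solutions_insert (by simp [h01, h02, hx0.symm, hy0.symm])
      ((Finset.subset_insert _ _).trans (Finset.subset_insert _ _)),
    image_restrictV_solutions_insert (by simp [h12, hx1.symm, hy1.symm]) (Finset.subset_insert _ _),
    image_restrictV_solutions_insert (by simp [hx2.symm, hy2.symm]) subset_rfl,
    image_restrictV_solutions]
  refine solutions_congr fun ν _ => ?_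
  simp only [dflt_datasetW_evalL_eps, Set.mem_ofPred_eq, restrictV, Finset.mem_insert,
    Finset.mem_singleton, Finset.union_insert, Finset.insert_union, Finset.union_idempotent,
    Finset.insert_eq_of_mem, hxy, hx0, hx1, hx2, hy0, hy1, hy2, h12, hxy.symm, hx1.symm,
    hx2.symm, hy1.symm, hy2.symm, h01.symm, h02.symm, h12.symm, or_self, or_false, or_true,
    ↓reduceIte, ne_eq, not_false_eq_true, Function.update_of_ne, Function.update_self,
    Option.some.injEq, condHolds, pval, ↓existsAndEq, and_true, exists_and_right, exists_and_left,
    true_and]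
  constructor
  · rintro ⟨⟨_, _, u, ⟨tr, ⟨d, hd, htr⟩, hpos⟩, -⟩, a, hx, hy⟩
    refine ⟨a, hx, hy, d, W.adoc_mem u d hd, tr, htr, ?_⟩
    rcases hpos with ⟨h, -⟩ | ⟨-, h, -⟩ | ⟨-, -, h⟩ <;> rw [hx] at h <;>
      simp only [Option.some_inj.1 h, true_or, or_true]
  · rintro ⟨a, hx, hy, d, hdoc, tr, htr, hpos⟩
    obtain ⟨u, hu⟩ := W.adoc_surj d hdoc
    have hmem : ∃ d, W.adoc u = some d ∧ tr ∈ W.data d := ⟨d, hu, htr⟩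
    rcases hpos with rfl | rfl | rfl
    · exact ⟨⟨_, _, u, ⟨tr, hmem, .inl ⟨hx, rfl, rfl⟩⟩, tr, hmem, .inl ⟨hy, rfl, rfl⟩⟩, _, hx, hy⟩
    · exact ⟨⟨_, _, u, ⟨tr, hmem, .inr (.inl ⟨rfl, hx, rfl⟩)⟩,
        tr, hmem, .inr (.inl ⟨rfl, hy, rfl⟩)⟩, _, hx, hy⟩
    · exact ⟨⟨_, _, u, ⟨tr, hmem, .inr (.inr ⟨rfl, rfl, hx⟩)⟩,
        tr, hmem, .inr (.inr ⟨rfl, rfl, hy⟩)⟩, _, hx, hy⟩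

lemma evalQ_bind_empty (c : Obj) (w : Var) (S : Set URI) :
    evalQ W (.base .eps (.bind .empty c w)) S = solutions {w} fun μ => μ w = some c := by
  rw [← singleton_single]
  ext μ
  simp only [evalQ, evalGP, Set.mem_singleton_iff, Set.mem_ofPred_eq, exists_eq_left]
  constructor
  · rintro ⟨-, rfl⟩
    funext v; simp [munion_apply, emptyMap]
  · rintro rfl
    refine ⟨rfl, ?_⟩
    funext v; simp [munion_apply, emptyMap]

def constQ (c : Obj) (x : Var) : LDQL :=
  .proj {x} (.qand (idQ x (fresh x x 0)) (.base .eps (.bind .empty c (fresh x x 0))))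

lemma evalQ_constQ (c : Obj) (x : Var) (S : Set URI) :
    evalQ W (constQ c x) S = solutions {x} fun μ => μ x = some c ∧ c ∈ termsW W := by
  have hxw := left_ne_fresh x x 0
  have hD : ({x, fresh x x 0} ∪ {fresh x x 0} : Finset Var) = insert (fresh x x 0) {x} := by
    ext; simp only [Finset.mem_union, Finset.mem_insert, Finset.mem_singleton]; tauto
  rw [constQ, evalQ, evalQ, evalQ_idQ W hxw, evalQ_bind_empty, relSolutions, mjoin_solutions, hD,
    image_restrictV_solutions_insert (by simp [hxw.symm]) subset_rfl, image_restrictV_solutions]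
  refine solutions_congr fun ν _ => ?_
  simp [restrictV, hxw, hxw.symm]

def ctxQ (q : LDQL) (x y : Var) : LDQL := .proj {y} (.qand q (.base .eps (.graphV x .empty)))

lemma evalQ_ctxQ {q : LDQL} {x y : Var} (hxy : x ≠ y) {R : Obj → Obj → Prop}
    (hq : ∀ S, evalQ W q S = relSolutions x y R) (u : URI) :
    evalQ W (ctxQ q x y) {u} =
      solutions {y} fun μ => (W.adoc u).isSome ∧ ∃ b, μ y = some b ∧ R (.uri u) b := by
  have hD : ({x, y} ∪ {x} : Finset Var) = insert x {y} := by
    ext; simp only [Finset.mem_union, Finset.mem_insert, Finset.mem_singleton]; tauto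
  rw [ctxQ, evalQ, evalQ, hq, evalQ_base_singleton, evalGP_graphV_empty, relSolutions,
    mjoin_solutions, hD, image_restrictV_solutions_insert (by simp [hxy]) subset_rfl,
    image_restrictV_solutions]
  refine solutions_congr fun ν _ => ?_
  simp [restrictV, hxy, hxy.symm, evalL_eps, and_comm]

def reachQ (q : LDQL) (x y : Var) : LDQL := .seedV x (.base (.star (.sub y q)) (.graphV y .empty))

lemma evalQ_reachQ {q : LDQL} {x y : Var} {R : Obj → Obj → Prop}
    (hq : ∀ u, evalQ W q {u} =
      solutions {y} fun μ => (W.adoc u).isSome ∧ ∃ b, μ y = some b ∧ R (.uri u) b)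
    (S : Set URI) :
    evalQ W (reachQ q x y) S = relSolutions x y fun c c' => ∃ u u', c = .uri u ∧ c' = .uri u' ∧
      (W.adoc u).isSome ∧ (W.adoc u').isSome ∧
      Relation.ReflTransGen (fun u u' => (W.adoc u).isSome ∧ R (.uri u) (.uri u')) u u' := by
  have hsub : (fun a b => b ∈ evalL W (.sub y q) a) =
      fun u u' => (W.adoc u).isSome ∧ R (.uri u) (.uri u') := by
    funext u u'
    simp only [evalL, hq, solutions, Set.mem_ofPred_eq]
    apply propext
    constructor
    · rintro ⟨-, μ, ⟨-, hs, b, hb, hR⟩, hμ⟩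
      exact ⟨hs, Option.some_inj.1 (hb.symm.trans hμ) ▸ hR⟩
    · rintro ⟨hs, hR⟩
      refine ⟨hs, single y (.uri u'), ⟨?_, hs, _, by simp [single], hR⟩, by simp [single]⟩
      rw [mdom_single, Finset.coe_singleton]
  have hstar : ∀ u, evalL W (.star (.sub y q)) u = {u' | (W.adoc u).isSome ∧
      Relation.ReflTransGen (fun u u' => (W.adoc u).isSome ∧ R (.uri u) (.uri u')) u u'} := by
    intro u
    rw [evalL, hsub]
  have hD : ({y} ∪ {x} : Finset Var) = {x, y} := by
    ext; simp only [Finset.mem_union, Finset.mem_insert, Finset.mem_singleton]; tauto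
  rw [reachQ, evalQ_seedV_solutions W (fun u => by
    rw [evalQ_base_singleton, evalGP_graphV_empty]), hD, relSolutions]
  refine solutions_congr fun ν _ => ?_
  simp only [hstar, Set.mem_ofPred_eq, restrictV, Finset.mem_singleton, ↓reduceIte, ↓existsAndEq,
    true_and, exists_and_left]
  constructor
  · rintro ⟨u, ⟨u', ⟨hs, hpath⟩, hs', hy⟩, hx⟩
    exact ⟨u, hx, u', hy, hs, hs', hpath⟩
  · rintro ⟨u, hx, u', hy, hs, hs', hpath⟩
    exact ⟨u, ⟨u', ⟨hs, hpath⟩, hs', hy⟩, hx⟩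

end Queries

section Translation

variable (W : Web)

def ppQ : PP → Var → Var → LDQL
  | .uri p, x, y => atomQ (.eq (.var (fresh x y 0)) (.term (.uri p))) x y
  | .neg us, x, y => atomQ (negCond (fresh x y 0) us) x y
  | .seq r1 r2, x, y => .proj {x, y} (.qand (ppQ r1 x (fresh x y 0)) (ppQ r2 (fresh x y 0) y))
  | .alt r1 r2, x, y => .qunion (ppQ r1 x y) (ppQ r2 x y)
  | .star r, x, y =>
    let m := fresh x y 0
    let m' := fresh m y 0
    .qunion (idQ x y) (.qunion (ppQ r x y) (.proj {x, y} (.qand (ppQ r x m)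
      (.proj {m, y} (.qand (reachQ (ctxQ (ppQ r (fresh m' m' 0) m') (fresh m' m' 0) m') m m')
        (ppQ r m' y))))))

theorem evalQ_ppQ (r : PP) :
    ∀ {x y : Var}, x ≠ y → ∀ S, evalQ W (ppQ r x y) S = relSolutions x y (ppRel W r) := by
  induction r with
  | uri p =>
    intro x y hxy S
    rw [ppQ, ppRel_uri]
    exact evalQ_atomQ W hxy (fun _ _ hz => condHolds_eq_uri hz) S
  | neg us =>
    intro x y hxy S
    rw [ppQ, ppRel_neg]
    exact evalQ_atomQ W hxy (fun _ _ hz => condHolds_negCond hz us) S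
  | seq r1 r2 ih1 ih2 =>
    intro x y hxy S
    exact evalQ_comp W (left_ne_fresh x y 0) (right_ne_fresh x y 0).symm
      (ih1 (left_ne_fresh x y 0) S) (ih2 (right_ne_fresh x y 0).symm S)
  | alt r1 r2 ih1 ih2 =>
    intro x y hxy S
    rw [ppQ, evalQ, ih1 hxy, ih2 hxy, relSolutions_union]
    rfl
  | star r ih =>
    intro x y hxy S
    set m := fresh x y 0
    set m' := fresh m y 0
    have hc := left_ne_fresh m' m' 0
    have hreach := evalQ_reachQ W (x := m)
      (evalQ_ctxQ W hc.symm fun S => ih hc.symm S) S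
    have hcomp := evalQ_comp W (left_ne_fresh m y 0) (right_ne_fresh m y 0).symm hreach
      (ih (right_ne_fresh m y 0).symm S)
    rw [ppQ, evalQ, evalQ, evalQ_idQ W hxy, ih hxy,
      evalQ_comp W (left_ne_fresh x y 0) (right_ne_fresh x y 0).symm (ih (left_ne_fresh x y 0) S)
        hcomp, relSolutions_union, relSolutions_union]
    congr 1
    funext a b
    simp only [ppRel, Relation.transGen_iff_of_ne (ppRel_src W r), Pi.sup_apply, sup_Prop_eq]

end Translation

section Patterns

variable (W : Web)

def PPTerm.vars : PPTerm → Finset Var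
  | .var v => {v}
  | _ => ∅

lemma ppVars_eq (α β : PPTerm) : ppVars α β = ↑(α.vars ∪ β.vars) := by
  ext v
  cases α <;> cases β <;> simp [ppVars, PPTerm.vars, eq_comm]

lemma PPTerm.toPval_congr {t : PPTerm} {μ μ' : Mapping} (h : ∀ v ∈ t.vars, μ v = μ' v) :
    t.toPval μ = t.toPval μ' := by
  cases t <;> simp_all [PPTerm.toPval, PPTerm.vars]

lemma PPTerm.toPval_restrictV {t : PPTerm} {D : Finset Var} (h : t.vars ⊆ D) (μ : Mapping) :
    t.toPval (restrictV D μ) = t.toPval μ :=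
  PPTerm.toPval_congr fun v hv => by simp [restrictV, h hv]

lemma PPTerm.toPval_update {t : PPTerm} {m : Var} (h : m ∉ t.vars) (μ : Mapping) (b : Option Obj) :
    t.toPval (Function.update μ m b) = t.toPval μ :=
  PPTerm.toPval_congr fun v hv => Function.update_of_ne (fun hvm => h (by subst hvm; exact hv)) _ _

/-- Constants are restricted to terms of the Web as well, which costs nothing since `ppRel`
only relates terms, and puts them on the same footing as variables. -/
def bindQ : PPTerm → Var → LDQL
  | .uri u, z => constQ (.uri u) z
  | .lit l, z => constQ (.lit l) z
  | .var v, z => idQ z v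

lemma evalQ_bindQ {t : PPTerm} {z : Var} (hz : z ∉ t.vars) (S : Set URI) :
    evalQ W (bindQ t z) S =
      solutions (insert z t.vars) fun μ => ∃ a ∈ termsW W, μ z = some a ∧ t.toPval μ = some a := by
  cases t with
  | var v =>
    rw [bindQ, evalQ_idQ W (by simpa [PPTerm.vars] using hz)]
    refine solutions_congr fun μ _ => ?_
    simp only [PPTerm.toPval]
    constructor
    · rintro ⟨a, _, hz, hv, rfl, ha⟩
      exact ⟨a, ha, hz, hv⟩
    · rintro ⟨a, ha, hz, hv⟩
      exact ⟨a, a, hz, hv, rfl, ha⟩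
  | uri u =>
    rw [bindQ, evalQ_constQ]
    refine solutions_congr fun μ _ => ?_
    simp [PPTerm.toPval, and_comm]
  | lit l =>
    rw [bindQ, evalQ_constQ]
    refine solutions_congr fun μ _ => ?_
    simp [PPTerm.toPval, and_comm]

def freshFor (V : Finset Var) : Var := V.sup id + 1

lemma freshFor_notMem (V : Finset Var) : freshFor V ∉ V :=
  fun h => Nat.not_succ_le_self _ (Finset.le_sup (f := id) h)

def ppQuery (α : PPTerm) (r : PP) (β : PPTerm) : LDQL :=
  let x := freshFor (α.vars ∪ β.vars)
  let y := freshFor (insert x (α.vars ∪ β.vars))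
  .proj (α.vars ∪ β.vars) (.qand (.qand (ppQ r x y) (bindQ α x)) (bindQ β y))

theorem ctxtEvalPat_eq_evalQ_ppQuery (α : PPTerm) (r : PP) (β : PPTerm) (S : Set URI) :
    ctxtEvalPat W α r β = evalQ W (ppQuery α r β) S := by
  rw [ppQuery]
  set V := α.vars ∪ β.vars
  set x := freshFor V
  set y := freshFor (insert x V)
  have hx : x ∉ V := freshFor_notMem V
  have hy : y ∉ insert x V := freshFor_notMem _
  have hxy : x ≠ y := fun h => hy (h ▸ Finset.mem_insert_self x V)
  have hyV : y ∉ V := fun h => hy (Finset.mem_insert_of_mem h)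
  have hxα : x ∉ α.vars := fun h => hx (Finset.mem_union_left _ h)
  have hxβ : x ∉ β.vars := fun h => hx (Finset.mem_union_right _ h)
  have hyα : y ∉ α.vars := fun h => hyV (Finset.mem_union_left _ h)
  have hyβ : y ∉ β.vars := fun h => hyV (Finset.mem_union_right _ h)
  have hD : ({x, y} ∪ insert x α.vars ∪ insert y β.vars : Finset Var) = insert x (insert y V) := by
    ext; simp only [V, Finset.mem_union, Finset.mem_insert, Finset.mem_singleton]; tauto
  rw [evalQ, evalQ, evalQ, evalQ_ppQ W r hxy, evalQ_bindQ W hxα, evalQ_bindQ W hyβ, relSolutions,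
    mjoin_solutions, mjoin_solutions, hD,
    image_restrictV_solutions_insert (by simp [hxy, hx]) (Finset.subset_insert _ _),
    image_restrictV_solutions_insert hyV subset_rfl, image_restrictV_solutions, ctxtEvalPat,
    ppVars_eq]
  refine solutions_congr fun ν _ => ?_
  simp only [restrictV_restrictV, Finset.subset_union_left, Finset.subset_union_right,
    PPTerm.toPval_restrictV, Finset.subset_insert, PPTerm.toPval_update, hyα, hxα, hyβ, hxβ,
    not_false_eq_true]
  simp only [exists_and_left, restrictV, Finset.mem_insert, Finset.mem_singleton, hxy, hxy.symm,
    or_false, or_true, true_or, ↓reduceIte, Function.update_self, Function.update_of_ne,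
    Option.some.injEq, ne_eq, not_false_eq_true, ↓existsAndEq, true_and, exists_eq_left',
    exists_and_right]
  constructor
  · rintro ⟨a, ha, b, hb, hR⟩
    have hterms := ppRel_mem_termsW W r a b hR
    exact ⟨b, ⟨a, hR, hterms.1, ha⟩, hterms.2, hb⟩
  · rintro ⟨b, ⟨a, hR, -, ha⟩, -, hb⟩
    exact ⟨a, ha, b, hb, hR⟩

/-- Every PP-pattern under context-based semantics can be
expressed as an LDQL query (evaluated with the empty seed set). -/
theorem PPpattern_expressible_in_LDQL (α β : PPTerm) (r : PP) :
    ∃ q : LDQL, ∀ W : Web, ctxtEvalPat W α r β = evalQ W q (∅ : Set URI) :=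
  ⟨ppQuery α r β, fun W => ctxtEvalPat_eq_evalQ_ppQuery W α r β ∅⟩

end Patterns

end

end LDQLFormal
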